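/- arXiv:2212.14603 — 2 statements merged into one kernel-verified Lean document; each statement's English description precedes it below -/
import Mathlib

section
/- Let f : ℝ → ℝ be smooth with f'(u)² < 1 (so the meridian (f(u),0,0,u) is timelike). The general rotational surface of first type with g(u) = u has zero Gauss curvature if and only if f satisfies the ODE (ln|(1+f')/(1−f')|)' = −2α²β²(f − u f')² / ((α² f + β² u f')(α² f² + β² u²)), equivalently 2f''/(1−f'²) equals the right hand side (assuming the denominators are nonzero). -/
open Real

noncomputable section

theorem stmt_4 (f : ℝ → ℝ) (α β : ℝ) (hα : 0 < α) (hβ : 0 < β)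
    (hf : ContDiff ℝ (⊤ : ℕ∞) f) (hf' : ∀ u, (deriv f u) ^ 2 < 1)
    (hd1 : ∀ u, α ^ 2 * f u + β ^ 2 * u * deriv f u ≠ 0)
    (hd2 : ∀ u, 0 < α ^ 2 * (f u) ^ 2 + β ^ 2 * u ^ 2)
    (K : ℝ → ℝ)
    -- Gauss curvature of the first-type general rotational surface with meridian (f(u),0,0,u),
    -- i.e. g(u) = u, g' = 1, g'' = 0:
    (hK : ∀ u, K u =
      (deriv (deriv f) u * (α ^ 2 * f u + β ^ 2 * u * deriv f u) *
          (α ^ 2 * (f u) ^ 2 + β ^ 2 * u ^ 2) +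
        α ^ 2 * β ^ 2 * (f u - u * deriv f u) ^ 2 * (1 - (deriv f u) ^ 2)) /
      ((1 - (deriv f u) ^ 2) ^ 2 * (α ^ 2 * (f u) ^ 2 + β ^ 2 * u ^ 2) ^ 2)) :
    (∀ u, K u = 0) ↔
      (∀ u, deriv (fun u => Real.log |(1 + deriv f u) / (1 - deriv f u)|) u =
        -2 * α ^ 2 * β ^ 2 * (f u - u * deriv f u) ^ 2 /
          ((α ^ 2 * f u + β ^ 2 * u * deriv f u) * (α ^ 2 * (f u) ^ 2 + β ^ 2 * u ^ 2))) := by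
  have hlt : ∀ u, -1 < deriv f u ∧ deriv f u < 1 := fun u => ⟨by nlinarith [hf' u], by nlinarith [hf' u]⟩
  have h1p : ∀ u, 0 < 1 + deriv f u := fun u => by linarith [(hlt u).1]
  have h1m : ∀ u, 0 < 1 - deriv f u := fun u => by linarith [(hlt u).2]
  have hdf : ∀ u, DifferentiableAt ℝ (deriv f) u := by
    intro u
    have hinf : ContDiff ℝ ((⊤:ℕ∞) : WithTop ℕ∞) f := hf.of_le (by simp)
    exact ((contDiff_infty_iff_deriv.mp hinf).2.differentiable (by simp)) u
  -- derivative computation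
  have hderiv : ∀ u, deriv (fun u => Real.log |(1 + deriv f u) / (1 - deriv f u)|) u
      = 2 * deriv (deriv f) u / (1 - (deriv f u) ^ 2) := by
    intro u
    have heq : (fun u => Real.log |(1 + deriv f u) / (1 - deriv f u)|)
        = fun u => Real.log (1 + deriv f u) - Real.log (1 - deriv f u) := by
      funext v
      rw [Real.log_abs, Real.log_div (ne_of_gt (h1p v)) (ne_of_gt (h1m v))]
    rw [heq]
    have hd : HasDerivAt (deriv f) (deriv (deriv f) u) u := (hdf u).hasDerivAt
    have h1 : HasDerivAt (fun v => Real.log (1 + deriv f v))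
        (deriv (deriv f) u / (1 + deriv f u)) u := by
      have := (Real.hasDerivAt_log (ne_of_gt (h1p u))).comp u ((hasDerivAt_const u (1:ℝ)).add hd)
      simpa [div_eq_inv_mul, Function.comp_def] using this
    have h2 : HasDerivAt (fun v => Real.log (1 - deriv f v))
        (-deriv (deriv f) u / (1 - deriv f u)) u := by
      have := (Real.hasDerivAt_log (ne_of_gt (h1m u))).comp u ((hasDerivAt_const u (1:ℝ)).sub hd)
      simpa [div_eq_inv_mul, mul_comm, Function.comp_def] using this
    rw [(h1.fun_sub h2).deriv]
    have hne1 : (1 + deriv f u) ≠ 0 := ne_of_gt (h1p u)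
    have hne2 : (1 - deriv f u) ≠ 0 := ne_of_gt (h1m u)
    have hm : (1 - (deriv f u) ^ 2) ≠ 0 := ne_of_gt (by nlinarith [hf' u])
    field_simp
    ring
  constructor
  · intro hK0 u
    have hnum : deriv (deriv f) u * (α ^ 2 * f u + β ^ 2 * u * deriv f u) *
          (α ^ 2 * (f u) ^ 2 + β ^ 2 * u ^ 2) +
        α ^ 2 * β ^ 2 * (f u - u * deriv f u) ^ 2 * (1 - (deriv f u) ^ 2) = 0 := by
      have h := hK0 u
      rw [hK u, div_eq_zero_iff] at h
      rcases h with h | h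
      · exact h
      · have hm : (1 - (deriv f u) ^ 2) ≠ 0 := ne_of_gt (by nlinarith [hf' u])
        exact absurd h (mul_ne_zero (pow_ne_zero _ hm) (pow_ne_zero _ (ne_of_gt (hd2 u))))
    rw [hderiv u]
    have hm : (1 - (deriv f u) ^ 2) ≠ 0 := ne_of_gt (by nlinarith [hf' u])
    have hD1 := hd1 u
    have hD2 : (α ^ 2 * (f u) ^ 2 + β ^ 2 * u ^ 2) ≠ 0 := ne_of_gt (hd2 u)
    field_simp
    have hD1' : α ^ 2 * f u + deriv f u * β ^ 2 * u ≠ 0 := by convert hD1 using 2; ring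
    field_simp
    linear_combination hnum
  · intro hode u
    rw [hK u, div_eq_zero_iff]
    left
    have h := hode u
    rw [hderiv u] at h
    have hm : (1 - (deriv f u) ^ 2) ≠ 0 := ne_of_gt (by nlinarith [hf' u])
    have hD1 := hd1 u
    have hD2 : (α ^ 2 * (f u) ^ 2 + β ^ 2 * u ^ 2) ≠ 0 := ne_of_gt (hd2 u)
    field_simp at h
    have hD1' : α ^ 2 * f u + deriv f u * β ^ 2 * u ≠ 0 := by convert hD1 using 2; ring
    field_simp at h
    linear_combination h
end
end

section
/- Let f : ℝ → ℝ be smooth with f'² < 1. The general rotational surface of first type with meridian (f(u),0,0,u) has flat normal connection (i.e. the normal curvature αβ(fg'−f'g)[(f'²−g'²)(α²fg'+β²f'g) + (f''g'−f'g'')(α²f²+β²g²)]/[(f'²−g'²)²(α²f²+β²g²)²] vanishes with g=u and f − uf' ≠ 0) if and only if f satisfies (ln|(1+f')/(1−f')|)' = 2(α²f + β²uf')/(α²f² + β²u²). -/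
open Real

noncomputable section

theorem stmt_6 (f : ℝ → ℝ) (α β : ℝ) (hα : 0 < α) (hβ : 0 < β)
    (hf : ContDiff ℝ (⊤ : ℕ∞) f) (hf' : ∀ u, (deriv f u) ^ 2 < 1)
    (hpos : ∀ u, 0 < α ^ 2 * (f u) ^ 2 + β ^ 2 * u ^ 2)
    (hnd : ∀ u, f u - u * deriv f u ≠ 0)
    (κ : ℝ → ℝ)
    -- Curvature of the normal connection of the first-type general rotational surface
    -- with meridian (f(u),0,0,u), i.e. g(u) = u, g' = 1, g'' = 0:
    (hκ : ∀ u, κ u =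
      α * β * (f u - u * deriv f u) *
        (((deriv f u) ^ 2 - 1) * (α ^ 2 * f u + β ^ 2 * u * deriv f u) +
          deriv (deriv f) u * (α ^ 2 * (f u) ^ 2 + β ^ 2 * u ^ 2)) /
      (((deriv f u) ^ 2 - 1) ^ 2 * (α ^ 2 * (f u) ^ 2 + β ^ 2 * u ^ 2) ^ 2)) :
    (∀ u, κ u = 0) ↔
      (∀ u, deriv (fun u => Real.log |(1 + deriv f u) / (1 - deriv f u)|) u =
        2 * (α ^ 2 * f u + β ^ 2 * u * deriv f u) / (α ^ 2 * (f u) ^ 2 + β ^ 2 * u ^ 2)) := by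
  have hf2 : ContDiff ℝ ((⊤ : ℕ∞) : WithTop ℕ∞) (deriv f) := (contDiff_infty_iff_deriv.mp (hf.of_le (by simp))).2
  have hd : ∀ u, HasDerivAt (deriv f) (deriv (deriv f) u) u :=
    fun u => (hf2.differentiable (by simp) u).hasDerivAt
  have hb1 : ∀ u, 0 < 1 + deriv f u := by intro u; nlinarith [hf' u]
  have hb2 : ∀ u, 0 < 1 - deriv f u := by intro u; nlinarith [hf' u]
  have hfun : (fun u => Real.log |(1 + deriv f u) / (1 - deriv f u)|) =
      fun u => Real.log (1 + deriv f u) - Real.log (1 - deriv f u) := by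
    funext u
    rw [Real.log_abs, Real.log_div (hb1 u).ne' (hb2 u).ne']
  have hderiv : ∀ u, deriv (fun u => Real.log |(1 + deriv f u) / (1 - deriv f u)|) u =
      deriv (deriv f) u / (1 + deriv f u) - (-(deriv (deriv f) u)) / (1 - deriv f u) := by
    intro u
    rw [hfun]
    exact ((((hd u).const_add 1).log (hb1 u).ne').sub
      (((hd u).const_sub 1).log (hb2 u).ne')).deriv
  constructor
  · intro h u
    have hk := (hκ u).symm.trans (h u)
    have hS := hpos u
    have hm : (deriv f u) ^ 2 - 1 ≠ 0 := by nlinarith [hf' u]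
    have hD : ((deriv f u) ^ 2 - 1) ^ 2 * (α ^ 2 * (f u) ^ 2 + β ^ 2 * u ^ 2) ^ 2 ≠ 0 :=
      mul_ne_zero (pow_ne_zero _ hm) (pow_ne_zero _ hS.ne')
    have hnum : α * β * (f u - u * deriv f u) *
        (((deriv f u) ^ 2 - 1) * (α ^ 2 * f u + β ^ 2 * u * deriv f u) +
          deriv (deriv f) u * (α ^ 2 * (f u) ^ 2 + β ^ 2 * u ^ 2)) = 0 := by
      field_simp at hk
      exact hk.trans (mul_zero _)
    have hN : (((deriv f u) ^ 2 - 1) * (α ^ 2 * f u + β ^ 2 * u * deriv f u) +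
        deriv (deriv f) u * (α ^ 2 * (f u) ^ 2 + β ^ 2 * u ^ 2)) = 0 := by
      rcases mul_eq_zero.mp hnum with h1 | h1
      · exact absurd h1 (mul_ne_zero (mul_ne_zero hα.ne' hβ.ne') (hnd u))
      · exact h1
    rw [hderiv u]
    rw [div_sub_div _ _ (hb1 u).ne' (hb2 u).ne', div_eq_div_iff
      (mul_pos (hb1 u) (hb2 u)).ne' hS.ne']
    nlinarith [hN]
  · intro h u
    have heq := h u
    rw [hderiv u] at heq
    have hS := hpos u
    rw [div_sub_div _ _ (hb1 u).ne' (hb2 u).ne', div_eq_div_iff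
      (mul_pos (hb1 u) (hb2 u)).ne' hS.ne'] at heq
    have hN : (((deriv f u) ^ 2 - 1) * (α ^ 2 * f u + β ^ 2 * u * deriv f u) +
        deriv (deriv f) u * (α ^ 2 * (f u) ^ 2 + β ^ 2 * u ^ 2)) = 0 := by nlinarith [heq]
    rw [hκ u, hN, mul_zero, zero_div]
end
end
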